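/- arXiv:2104.05137 — 3 statements merged into one kernel-verified Lean document; each statement's English description precedes it below -/
import Mathlib

section
/- Let b₁, b₂ be real numbers with b₁ + b₂ > 1/2 and b₁ < 1/2, b₂ < 1/2, and b₁, b₂ > 0. Then there is a constant c (depending only on b₁, b₂) such that for all real α, β: ∫_ℝ dy / (⟨y-α⟩^{2b₁}·⟨y-β⟩^{2b₂}) ≤ c / ⟨α-β⟩^{2b₁+2b₂-1}, where ⟨x⟩ = (1+x²)^{1/2}. -/
set_option maxHeartbeats 1000000

open MeasureTheory

open Set

lemma gtv_integrable {q : ℝ} (hq : 1/2 < q) :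
    Integrable (fun y : ℝ => (1 + y^2) ^ (-q)) := by
  have h := integrable_rpow_neg_one_add_norm_sq (E := ℝ) (μ := volume)
    (r := 2*q) (by simp [Module.finrank_self]; linarith)
  simpa [Real.norm_eq_abs, sq_abs, neg_div, mul_div_assoc] using h

lemma rinv_le {a b q : ℝ} (ha : 0 < a) (hab : a ≤ b) (hq : 0 ≤ q) :
    b ^ (-q) ≤ a ^ (-q) :=
  Real.rpow_le_rpow_of_nonpos ha hab (neg_nonpos.2 hq)

lemma gtv_cont {b : ℝ} : Continuous (fun y : ℝ => (1 + y^2) ^ (-b)) := by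
  apply Continuous.rpow_const (by continuity)
  intro x; left; positivity

lemma gtv_prod_le {b₁ b₂ : ℝ} (hb₁ : 0 ≤ b₁) (hb₂ : 0 ≤ b₂) (r y : ℝ) :
    (1 + y^2) ^ (-b₁) * (1 + (y-r)^2) ^ (-b₂)
      ≤ (1 + y^2) ^ (-(b₁+b₂)) + (1 + (y-r)^2) ^ (-(b₁+b₂)) := by
  have hy : (0:ℝ) < 1 + y^2 := by positivity
  have hyr : (0:ℝ) < 1 + (y-r)^2 := by positivity
  rcases le_total (1 + y^2) (1 + (y-r)^2) with h | h
  · have : (1 + y^2) ^ (-b₁) * (1 + (y-r)^2) ^ (-b₂)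
        ≤ (1 + y^2) ^ (-b₁) * (1 + y^2) ^ (-b₂) :=
      mul_le_mul_of_nonneg_left (rinv_le hy h hb₂) (Real.rpow_nonneg hy.le _)
    calc (1 + y^2) ^ (-b₁) * (1 + (y-r)^2) ^ (-b₂)
        ≤ (1 + y^2) ^ (-b₁) * (1 + y^2) ^ (-b₂) := this
      _ = (1 + y^2) ^ (-(b₁+b₂)) := by
          rw [← Real.rpow_add hy]; ring_nf
      _ ≤ _ := le_add_of_nonneg_right (Real.rpow_nonneg hyr.le _)
  · have : (1 + y^2) ^ (-b₁) * (1 + (y-r)^2) ^ (-b₂)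
        ≤ (1 + (y-r)^2) ^ (-b₁) * (1 + (y-r)^2) ^ (-b₂) :=
      mul_le_mul_of_nonneg_right (rinv_le hyr h hb₁) (Real.rpow_nonneg hyr.le _)
    calc (1 + y^2) ^ (-b₁) * (1 + (y-r)^2) ^ (-b₂)
        ≤ (1 + (y-r)^2) ^ (-b₁) * (1 + (y-r)^2) ^ (-b₂) := this
      _ = (1 + (y-r)^2) ^ (-(b₁+b₂)) := by
          rw [← Real.rpow_add hyr]; ring_nf
      _ ≤ _ := le_add_of_nonneg_left (Real.rpow_nonneg hy.le _)

lemma gtv_integrable_f {b₁ b₂ : ℝ} (h0₁ : 0 < b₁) (h0₂ : 0 < b₂)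
    (hsum : 1/2 < b₁ + b₂) (r : ℝ) :
    Integrable (fun y : ℝ => (1 + y^2) ^ (-b₁) * (1 + (y-r)^2) ^ (-b₂)) := by
  have hg := gtv_integrable hsum
  have hg2 : Integrable (fun y : ℝ => (1 + (y-r)^2) ^ (-(b₁+b₂))) :=
    hg.comp_sub_right r
  refine (hg.add hg2).mono' ?_ ?_
  · exact (gtv_cont.mul (gtv_cont.comp (by continuity))).aestronglyMeasurable
  · refine Filter.Eventually.of_forall fun y => ?_
    rw [Real.norm_eq_abs, abs_of_nonneg (by positivity)]
    exact gtv_prod_le h0₁.le h0₂.le r y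

lemma gtv_rpow_eq {y q : ℝ} (hy : 0 < y) : (y^2 : ℝ) ^ (-q) = y ^ (-(2*q)) := by
  rw [← Real.rpow_natCast y 2, ← Real.rpow_mul hy.le]
  norm_num

lemma gtv_Ioi_bound {q R : ℝ} (hq : 1/2 < q) (hR : 0 < R) :
    ∫ y in Ioi R, (1 + y^2) ^ (-q) ≤ R ^ (1 - 2*q) / (2*q - 1) := by
  have ha : -(2*q) < -1 := by linarith
  have hint : IntegrableOn (fun y : ℝ => y ^ (-(2*q))) (Ioi R) :=
    integrableOn_Ioi_rpow_of_lt ha hR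
  calc ∫ y in Ioi R, (1 + y^2) ^ (-q)
      ≤ ∫ y in Ioi R, y ^ (-(2*q)) := by
        refine setIntegral_mono_on ((gtv_integrable hq).integrableOn) hint
          measurableSet_Ioi fun y hy => ?_
        have hy0 : (0:ℝ) < y := hR.trans hy
        rw [← gtv_rpow_eq hy0]
        exact rinv_le (by positivity) (by nlinarith) (by positivity)
    _ = -R ^ (-(2*q) + 1) / (-(2*q) + 1) := integral_Ioi_rpow_of_lt ha hR
    _ = R ^ (1 - 2*q) / (2*q - 1) := by
        have h1 : (1:ℝ) - 2*q ≠ 0 := by linarith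
        have h2 : 2*q - 1 ≠ 0 := by linarith
        rw [show -(2*q) + 1 = 1 - 2*q by ring]
        field_simp
        ring

lemma gtv_Icc_bound {b R : ℝ} (hb : 0 < b) (hb' : b < 1/2) (hR : 0 < R) :
    ∫ y in Icc (-R) R, (1 + y^2) ^ (-b) ≤ 2 * (R ^ (1 - 2*b) / (1 - 2*b)) := by
  have hRR : -R ≤ R := by linarith
  have hcont : Continuous (fun y : ℝ => (1 + y^2) ^ (-b)) := gtv_cont
  have hii : ∀ u v : ℝ, IntervalIntegrable (fun y : ℝ => (1 + y^2) ^ (-b)) volume u v :=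
    fun u v => hcont.intervalIntegrable u v
  have key : ∫ y in (0:ℝ)..R, (1 + y^2) ^ (-b) ≤ R ^ (1 - 2*b) / (1 - 2*b) := by
    have hrpow : IntervalIntegrable (fun y : ℝ => y ^ (-(2*b))) volume 0 R :=
      intervalIntegral.intervalIntegrable_rpow' (by linarith)
    calc ∫ y in (0:ℝ)..R, (1 + y^2) ^ (-b)
        ≤ ∫ y in (0:ℝ)..R, y ^ (-(2*b)) := by
          rw [intervalIntegral.integral_of_le hR.le, intervalIntegral.integral_of_le hR.le]
          refine setIntegral_mono_on ((hii 0 R).1) hrpow.1 measurableSet_Ioc fun y hy => ?_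
          rw [← gtv_rpow_eq hy.1]
          exact rinv_le (pow_pos hy.1 2) (by nlinarith [hy.1]) (by positivity)
      _ = (R ^ (-(2*b) + 1) - (0:ℝ) ^ (-(2*b) + 1)) / (-(2*b) + 1) :=
          integral_rpow (Or.inl (by linarith))
      _ = R ^ (1 - 2*b) / (1 - 2*b) := by
          rw [Real.zero_rpow (by linarith), show -(2*b) + 1 = 1 - 2*b by ring, sub_zero]
  have hneg : ∫ y in (-R)..(0:ℝ), (1 + y^2) ^ (-b) = ∫ y in (0:ℝ)..R, (1 + y^2) ^ (-b) := by
    have := intervalIntegral.integral_comp_neg (a := (0:ℝ)) (b := R)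
      (f := fun y : ℝ => (1 + y^2) ^ (-b))
    simp only [neg_sq, neg_zero] at this
    rw [← this]
  calc ∫ y in Icc (-R) R, (1 + y^2) ^ (-b)
      = ∫ y in (-R)..R, (1 + y^2) ^ (-b) := by
        rw [integral_Icc_eq_integral_Ioc, intervalIntegral.integral_of_le hRR]
    _ = (∫ y in (-R)..(0:ℝ), (1 + y^2) ^ (-b)) + ∫ y in (0:ℝ)..R, (1 + y^2) ^ (-b) := by
        rw [intervalIntegral.integral_add_adjacent_intervals (hii _ _) (hii _ _)]
    _ ≤ 2 * (R ^ (1 - 2*b) / (1 - 2*b)) := by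
        rw [hneg]; linarith

lemma gtv_tails_bound {q R : ℝ} (hq : 1/2 < q) (hR : 0 < R) :
    ∫ y in Iic (-R) ∪ Ici R, (1 + y^2) ^ (-q) ≤ 2 * (R ^ (1 - 2*q) / (2*q - 1)) := by
  have hg := gtv_integrable hq
  have hIci : ∫ y in Ici R, (1 + y^2) ^ (-q) ≤ R ^ (1 - 2*q) / (2*q - 1) := by
    rw [integral_Ici_eq_integral_Ioi]; exact gtv_Ioi_bound hq hR
  have hIic : ∫ y in Iic (-R), (1 + y^2) ^ (-q) = ∫ y in Ici R, (1 + y^2) ^ (-q) := by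
    have := integral_comp_neg_Iic (-R) (fun y : ℝ => (1 + y^2) ^ (-q))
    simp only [neg_sq, neg_neg] at this
    rw [this, integral_Ici_eq_integral_Ioi]
  rw [setIntegral_union (by
        refine Set.disjoint_left.mpr fun y hy hy' => ?_
        simp only [mem_Iic, mem_Ici] at hy hy'
        linarith) measurableSet_Ici hg.integrableOn hg.integrableOn, hIic]
  linarith

lemma gtv_estA {b₁ b₂ r : ℝ} (h0₁ : 0 < b₁) (h₁ : b₁ < 1/2) (h0₂ : 0 < b₂)
    (hsum : 1/2 < b₁ + b₂) (hr : r ≠ 0) :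
    ∫ y in Icc (-(|r|/2)) (|r|/2), (1 + y^2) ^ (-b₁) * (1 + (y-r)^2) ^ (-b₂)
      ≤ (4 ^ b₂ * (1 + r^2) ^ (-b₂)) * (2 * ((|r|/2) ^ (1 - 2*b₁) / (1 - 2*b₁))) := by
  have hR : 0 < |r|/2 := by have := abs_pos.mpr hr; linarith
  have hm : (0:ℝ) < 1 + r^2 := by positivity
  have hpt : ∀ y ∈ Icc (-(|r|/2)) (|r|/2),
      (1 + y^2) ^ (-b₁) * (1 + (y-r)^2) ^ (-b₂)
        ≤ (4 ^ b₂ * (1 + r^2) ^ (-b₂)) * (1 + y^2) ^ (-b₁) := by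
    intro y hy
    rw [mem_Icc] at hy
    have hyabs : |y| ≤ |r|/2 := abs_le.mpr hy
    have h3 : |r|/2 ≤ |r - y| := by
      have := abs_sub_abs_le_abs_sub r y
      linarith
    have hsq : r^2/4 ≤ (y - r)^2 := by
      have h4 : (|r|/2)^2 ≤ |r - y|^2 := by nlinarith [abs_nonneg (r - y)]
      rw [sq_abs] at h4
      have : (r - y)^2 = (y - r)^2 := by ring
      nlinarith [sq_abs r]
    have hdist : (1 + r^2)/4 ≤ 1 + (y - r)^2 := by linarith
    have hb2 : (1 + (y-r)^2) ^ (-b₂) ≤ 4 ^ b₂ * (1 + r^2) ^ (-b₂) := by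
      have h5 := rinv_le (by linarith : (0:ℝ) < (1 + r^2)/4) hdist h0₂.le
      rwa [Real.div_rpow hm.le (by norm_num : (0:ℝ) ≤ 4),
        Real.rpow_neg (by norm_num : (0:ℝ) ≤ 4), div_eq_mul_inv, inv_inv, mul_comm] at h5
    calc (1 + y^2) ^ (-b₁) * (1 + (y-r)^2) ^ (-b₂)
        ≤ (1 + y^2) ^ (-b₁) * (4 ^ b₂ * (1 + r^2) ^ (-b₂)) :=
          mul_le_mul_of_nonneg_left hb2 (Real.rpow_nonneg (by positivity) _)
      _ = (4 ^ b₂ * (1 + r^2) ^ (-b₂)) * (1 + y^2) ^ (-b₁) := by ring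
  calc ∫ y in Icc (-(|r|/2)) (|r|/2), (1 + y^2) ^ (-b₁) * (1 + (y-r)^2) ^ (-b₂)
      ≤ ∫ y in Icc (-(|r|/2)) (|r|/2), (4 ^ b₂ * (1 + r^2) ^ (-b₂)) * (1 + y^2) ^ (-b₁) := by
        refine setIntegral_mono_on ((gtv_integrable_f h0₁ h0₂ hsum r).integrableOn)
          ((continuous_const.mul gtv_cont).integrableOn_Icc) measurableSet_Icc hpt
    _ = (4 ^ b₂ * (1 + r^2) ^ (-b₂)) * ∫ y in Icc (-(|r|/2)) (|r|/2), (1 + y^2) ^ (-b₁) :=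
        integral_const_mul _ _
    _ ≤ (4 ^ b₂ * (1 + r^2) ^ (-b₂)) * (2 * ((|r|/2) ^ (1 - 2*b₁) / (1 - 2*b₁))) := by
        refine mul_le_mul_of_nonneg_left (gtv_Icc_bound h0₁ h₁ hR) (by positivity)

lemma gtv_estB {b₁ b₂ r : ℝ} (h0₁ : 0 < b₁) (h0₂ : 0 < b₂) (h₂ : b₂ < 1/2)
    (hsum : 1/2 < b₁ + b₂) (hr : r ≠ 0) :
    ∫ y in Icc (r - |r|/2) (r + |r|/2), (1 + y^2) ^ (-b₁) * (1 + (y-r)^2) ^ (-b₂)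
      ≤ (4 ^ b₁ * (1 + r^2) ^ (-b₁)) * (2 * ((|r|/2) ^ (1 - 2*b₂) / (1 - 2*b₂))) := by
  have hR : 0 < |r|/2 := by have := abs_pos.mpr hr; linarith
  have hm : (0:ℝ) < 1 + r^2 := by positivity
  have hpt : ∀ y ∈ Icc (r - |r|/2) (r + |r|/2),
      (1 + y^2) ^ (-b₁) * (1 + (y-r)^2) ^ (-b₂)
        ≤ (4 ^ b₁ * (1 + r^2) ^ (-b₁)) * (1 + (y-r)^2) ^ (-b₂) := by
    intro y hy
    rw [mem_Icc] at hy
    have hyabs : |y - r| ≤ |r|/2 := abs_le.mpr ⟨by linarith, by linarith⟩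
    have h3 : |r|/2 ≤ |y| := by
      have := abs_sub_abs_le_abs_sub r (r - y)
      have h4 : |r - (r - y)| = |y| := by rw [show r - (r - y) = y by ring]
      have h5 : |r - y| = |y - r| := abs_sub_comm r y
      linarith
    have hsq : r^2/4 ≤ y^2 := by
      have h4 : (|r|/2)^2 ≤ |y|^2 := by nlinarith [abs_nonneg y]
      rw [sq_abs] at h4
      nlinarith [sq_abs r]
    have hdist : (1 + r^2)/4 ≤ 1 + y^2 := by linarith
    have hb1 : (1 + y^2) ^ (-b₁) ≤ 4 ^ b₁ * (1 + r^2) ^ (-b₁) := by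
      have h5 := rinv_le (by linarith : (0:ℝ) < (1 + r^2)/4) hdist h0₁.le
      rwa [Real.div_rpow hm.le (by norm_num : (0:ℝ) ≤ 4),
        Real.rpow_neg (by norm_num : (0:ℝ) ≤ 4), div_eq_mul_inv, inv_inv, mul_comm] at h5
    exact mul_le_mul_of_nonneg_right hb1 (Real.rpow_nonneg (by positivity) _)
  have htrans : ∫ y in Icc (r - |r|/2) (r + |r|/2), (1 + (y-r)^2) ^ (-b₂)
      = ∫ y in Icc (-(|r|/2)) (|r|/2), (1 + y^2) ^ (-b₂) := by
    rw [integral_Icc_eq_integral_Ioc, integral_Icc_eq_integral_Ioc,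
      ← intervalIntegral.integral_of_le (by linarith : r - |r|/2 ≤ r + |r|/2),
      ← intervalIntegral.integral_of_le (by linarith : -(|r|/2) ≤ |r|/2)]
    have := intervalIntegral.integral_comp_sub_right
      (a := r - |r|/2) (b := r + |r|/2) (fun y : ℝ => (1 + y^2) ^ (-b₂)) r
    rw [this, show r - |r|/2 - r = -(|r|/2) by ring, show r + |r|/2 - r = |r|/2 by ring]
  calc ∫ y in Icc (r - |r|/2) (r + |r|/2), (1 + y^2) ^ (-b₁) * (1 + (y-r)^2) ^ (-b₂)
      ≤ ∫ y in Icc (r - |r|/2) (r + |r|/2),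
          (4 ^ b₁ * (1 + r^2) ^ (-b₁)) * (1 + (y-r)^2) ^ (-b₂) := by
        refine setIntegral_mono_on ((gtv_integrable_f h0₁ h0₂ hsum r).integrableOn)
          ((continuous_const.mul (gtv_cont.comp (by continuity))).integrableOn_Icc)
          measurableSet_Icc hpt
    _ = (4 ^ b₁ * (1 + r^2) ^ (-b₁)) *
          ∫ y in Icc (r - |r|/2) (r + |r|/2), (1 + (y-r)^2) ^ (-b₂) := integral_const_mul _ _
    _ ≤ (4 ^ b₁ * (1 + r^2) ^ (-b₁)) * (2 * ((|r|/2) ^ (1 - 2*b₂) / (1 - 2*b₂))) := by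
        rw [htrans]
        exact mul_le_mul_of_nonneg_left (gtv_Icc_bound h0₂ h₂ hR) (by positivity)

lemma gtv_measC1 (R r : ℝ) : MeasurableSet ({y : ℝ | R ≤ |y|} ∩ {y : ℝ | |y| ≤ |y - r|}) := by
  refine MeasurableSet.inter ?_ ?_
  · exact measurableSet_le measurable_const (by fun_prop)
  · exact measurableSet_le (by fun_prop) (by fun_prop)

lemma gtv_measC2 (R r : ℝ) : MeasurableSet ({y : ℝ | R ≤ |y - r|} ∩ {y : ℝ | |y - r| ≤ |y|}) := by
  refine MeasurableSet.inter ?_ ?_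
  · exact measurableSet_le measurable_const (by fun_prop)
  · exact measurableSet_le (by fun_prop) (by fun_prop)

lemma gtv_estC1 {b₁ b₂ r : ℝ} (h0₁ : 0 < b₁) (h0₂ : 0 < b₂)
    (hsum : 1/2 < b₁ + b₂) (hr : r ≠ 0) :
    ∫ y in {y : ℝ | |r|/2 ≤ |y|} ∩ {y : ℝ | |y| ≤ |y - r|},
        (1 + y^2) ^ (-b₁) * (1 + (y-r)^2) ^ (-b₂)
      ≤ 2 * ((|r|/2) ^ (1 - 2*(b₁+b₂)) / (2*(b₁+b₂) - 1)) := by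
  have hR : 0 < |r|/2 := by have := abs_pos.mpr hr; linarith
  have hgq := gtv_integrable (q := b₁ + b₂) hsum
  have hpt : ∀ y ∈ {y : ℝ | |r|/2 ≤ |y|} ∩ {y : ℝ | |y| ≤ |y - r|},
      (1 + y^2) ^ (-b₁) * (1 + (y-r)^2) ^ (-b₂) ≤ (1 + y^2) ^ (-(b₁+b₂)) := by
    rintro y ⟨-, hy2⟩
    simp only [mem_setOf_eq] at hy2
    have hsq : y^2 ≤ (y - r)^2 := by
      have := mul_self_le_mul_self (abs_nonneg y) hy2
      rwa [← sq, ← sq, sq_abs, sq_abs] at this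
    have h1 : (1 + (y-r)^2 : ℝ) ^ (-b₂) ≤ (1 + y^2) ^ (-b₂) :=
      rinv_le (by positivity) (by linarith) h0₂.le
    calc (1 + y^2) ^ (-b₁) * (1 + (y-r)^2) ^ (-b₂)
        ≤ (1 + y^2) ^ (-b₁) * (1 + y^2) ^ (-b₂) :=
          mul_le_mul_of_nonneg_left h1 (Real.rpow_nonneg (by positivity) _)
      _ = (1 + y^2) ^ (-(b₁+b₂)) := by
          rw [← Real.rpow_add (by positivity)]; ring_nf
  have hsub : {y : ℝ | |r|/2 ≤ |y|} ∩ {y : ℝ | |y| ≤ |y - r|}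
      ⊆ Iic (-(|r|/2)) ∪ Ici (|r|/2) := by
    rintro y ⟨hy1, -⟩
    simp only [mem_setOf_eq] at hy1
    rcases le_abs.mp hy1 with h | h
    · exact Or.inr h
    · exact Or.inl (by simpa [mem_Iic] using by linarith)
  calc ∫ y in {y : ℝ | |r|/2 ≤ |y|} ∩ {y : ℝ | |y| ≤ |y - r|},
        (1 + y^2) ^ (-b₁) * (1 + (y-r)^2) ^ (-b₂)
      ≤ ∫ y in {y : ℝ | |r|/2 ≤ |y|} ∩ {y : ℝ | |y| ≤ |y - r|}, (1 + y^2) ^ (-(b₁+b₂)) :=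
        setIntegral_mono_on ((gtv_integrable_f h0₁ h0₂ hsum r).integrableOn)
          hgq.integrableOn (gtv_measC1 _ _) hpt
    _ ≤ ∫ y in Iic (-(|r|/2)) ∪ Ici (|r|/2), (1 + y^2) ^ (-(b₁+b₂)) := by
        refine setIntegral_mono_set hgq.integrableOn
          (Filter.Eventually.of_forall fun y => Real.rpow_nonneg (by positivity) _)
          (HasSubset.Subset.eventuallyLE hsub)
    _ ≤ 2 * ((|r|/2) ^ (1 - 2*(b₁+b₂)) / (2*(b₁+b₂) - 1)) := gtv_tails_bound hsum hR

lemma gtv_estC2 {b₁ b₂ r : ℝ} (h0₁ : 0 < b₁) (h0₂ : 0 < b₂)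
    (hsum : 1/2 < b₁ + b₂) (hr : r ≠ 0) :
    ∫ y in {y : ℝ | |r|/2 ≤ |y - r|} ∩ {y : ℝ | |y - r| ≤ |y|},
        (1 + y^2) ^ (-b₁) * (1 + (y-r)^2) ^ (-b₂)
      ≤ 2 * ((|r|/2) ^ (1 - 2*(b₁+b₂)) / (2*(b₁+b₂) - 1)) := by
  have hR : 0 < |r|/2 := by have := abs_pos.mpr hr; linarith
  have hgq := gtv_integrable (q := b₁ + b₂) hsum
  have hgqr : Integrable (fun y : ℝ => (1 + (y - r)^2) ^ (-(b₁+b₂))) := hgq.comp_sub_right r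
  set S : Set ℝ := Iic (-(|r|/2)) ∪ Ici (|r|/2) with hSdef
  have hS : MeasurableSet S := measurableSet_Iic.union measurableSet_Ici
  set S' : Set ℝ := (fun y : ℝ => y - r) ⁻¹' S with hS'def
  have hS' : MeasurableSet S' := hS.preimage (measurable_id.sub_const r)
  have hpt : ∀ y ∈ {y : ℝ | |r|/2 ≤ |y - r|} ∩ {y : ℝ | |y - r| ≤ |y|},
      (1 + y^2) ^ (-b₁) * (1 + (y-r)^2) ^ (-b₂) ≤ (1 + (y - r)^2) ^ (-(b₁+b₂)) := by
    rintro y ⟨-, hy2⟩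
    simp only [mem_setOf_eq] at hy2
    have hsq : (y - r)^2 ≤ y^2 := by
      have := mul_self_le_mul_self (abs_nonneg (y - r)) hy2
      rwa [← sq, ← sq, sq_abs, sq_abs] at this
    have h1 : (1 + y^2 : ℝ) ^ (-b₁) ≤ (1 + (y - r)^2) ^ (-b₁) :=
      rinv_le (by positivity) (by linarith) h0₁.le
    calc (1 + y^2) ^ (-b₁) * (1 + (y-r)^2) ^ (-b₂)
        ≤ (1 + (y - r)^2) ^ (-b₁) * (1 + (y - r)^2) ^ (-b₂) :=
          mul_le_mul_of_nonneg_right h1 (Real.rpow_nonneg (by positivity) _)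
      _ = (1 + (y - r)^2) ^ (-(b₁+b₂)) := by
          rw [← Real.rpow_add (by positivity)]; ring_nf
  have hsub : {y : ℝ | |r|/2 ≤ |y - r|} ∩ {y : ℝ | |y - r| ≤ |y|} ⊆ S' := by
    rintro y ⟨hy1, -⟩
    simp only [mem_setOf_eq] at hy1
    simp only [hS'def, mem_preimage, hSdef, mem_union, mem_Iic, mem_Ici]
    rcases le_abs.mp hy1 with h | h
    · exact Or.inr h
    · exact Or.inl (by linarith)
  have htrans : ∫ y in S', (1 + (y - r)^2) ^ (-(b₁+b₂))
      = ∫ y in S, (1 + y^2) ^ (-(b₁+b₂)) := by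
    rw [← integral_indicator hS', ← integral_indicator hS]
    have hfun : (S'.indicator fun y : ℝ => (1 + (y - r)^2) ^ (-(b₁+b₂)))
        = fun y : ℝ => S.indicator (fun z : ℝ => (1 + z^2) ^ (-(b₁+b₂))) (y - r) := by
      funext y
      by_cases hy : y - r ∈ S
      · rw [indicator_of_mem (by simpa [hS'def, mem_preimage] using hy),
          indicator_of_mem hy]
      · rw [indicator_of_notMem (by simpa [hS'def, mem_preimage] using hy),
          indicator_of_notMem hy]
    rw [hfun]
    exact integral_sub_right_eq_self _ r
  calc ∫ y in {y : ℝ | |r|/2 ≤ |y - r|} ∩ {y : ℝ | |y - r| ≤ |y|},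
        (1 + y^2) ^ (-b₁) * (1 + (y-r)^2) ^ (-b₂)
      ≤ ∫ y in {y : ℝ | |r|/2 ≤ |y - r|} ∩ {y : ℝ | |y - r| ≤ |y|},
          (1 + (y - r)^2) ^ (-(b₁+b₂)) :=
        setIntegral_mono_on ((gtv_integrable_f h0₁ h0₂ hsum r).integrableOn)
          hgqr.integrableOn (gtv_measC2 _ _) hpt
    _ ≤ ∫ y in S', (1 + (y - r)^2) ^ (-(b₁+b₂)) := by
        refine setIntegral_mono_set hgqr.integrableOn
          (Filter.Eventually.of_forall fun y => Real.rpow_nonneg (by positivity) _)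
          (HasSubset.Subset.eventuallyLE hsub)
    _ = ∫ y in S, (1 + y^2) ^ (-(b₁+b₂)) := htrans
    _ ≤ 2 * ((|r|/2) ^ (1 - 2*(b₁+b₂)) / (2*(b₁+b₂) - 1)) := gtv_tails_bound hsum hR

lemma gtv_main {b₁ b₂ : ℝ} (h0₁ : 0 < b₁) (h0₂ : 0 < b₂)
    (h₁ : b₁ < 1/2) (h₂ : b₂ < 1/2) (hsum : 1/2 < b₁ + b₂) :
    ∃ c : ℝ, 0 < c ∧ ∀ r : ℝ,
      ∫ y : ℝ, (1 + y^2) ^ (-b₁) * (1 + (y-r)^2) ^ (-b₂)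
        ≤ c * (1 + r^2) ^ (-(b₁ + b₂ - 1/2)) := by
  set κ := b₁ + b₂ - 1/2 with hκdef
  have hκ : 0 < κ := by simp only [hκdef]; linarith
  set K := ∫ y : ℝ, (1 + y^2) ^ (-(b₁+b₂)) with hKdef
  have hK : 0 ≤ K := integral_nonneg fun y => Real.rpow_nonneg (by positivity) _
  set c₀ : ℝ := 2 ^ κ * (2 * K) with hc₀
  set c₁ : ℝ := 2 * 4 ^ b₂ / (1 - 2*b₁) with hc₁
  set c₂ : ℝ := 2 * 4 ^ b₁ / (1 - 2*b₂) with hc₂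
  set c₃ : ℝ := 4 * 8 ^ κ / (2*(b₁+b₂) - 1) with hc₃
  have hc₀nn : 0 ≤ c₀ := by positivity
  have hc₁nn : 0 ≤ c₁ := by
    have : (0:ℝ) < 1 - 2*b₁ := by linarith
    positivity
  have hc₂nn : 0 ≤ c₂ := by
    have : (0:ℝ) < 1 - 2*b₂ := by linarith
    positivity
  have hc₃nn : 0 ≤ c₃ := by
    have : (0:ℝ) < 2*(b₁+b₂) - 1 := by linarith
    positivity
  refine ⟨c₀ + c₁ + c₂ + c₃ + 1, by positivity, fun r => ?_⟩
  have hm : (0:ℝ) < 1 + r^2 := by positivity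
  have hmκ : 0 ≤ (1 + r^2) ^ (-κ) := Real.rpow_nonneg hm.le _
  have hf := gtv_integrable_f h0₁ h0₂ hsum r
  have hg := gtv_integrable (q := b₁ + b₂) hsum
  by_cases hr : r^2 ≤ 1
  · -- small r
    have hsmall : ∫ y : ℝ, (1 + y^2) ^ (-b₁) * (1 + (y-r)^2) ^ (-b₂) ≤ 2 * K := by
      have hgr : Integrable (fun y : ℝ => (1 + (y - r)^2) ^ (-(b₁+b₂))) :=
        hg.comp_sub_right r
      calc ∫ y : ℝ, (1 + y^2) ^ (-b₁) * (1 + (y-r)^2) ^ (-b₂)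
          ≤ ∫ y : ℝ, ((1 + y^2) ^ (-(b₁+b₂)) + (1 + (y-r)^2) ^ (-(b₁+b₂))) :=
            integral_mono hf (hg.add hgr) (gtv_prod_le h0₁.le h0₂.le r)
        _ = K + K := by
            rw [integral_add hg hgr, hKdef, integral_sub_right_eq_self
              (fun y : ℝ => (1 + y^2) ^ (-(b₁+b₂))) r]
        _ = 2 * K := by ring
    have h2m : (2:ℝ) ^ (-κ) ≤ (1 + r^2) ^ (-κ) :=
      rinv_le hm (by linarith) hκ.le
    have h2κ : (2:ℝ) ^ κ * (2:ℝ) ^ (-κ) = 1 := by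
      rw [← Real.rpow_add two_pos]; simp
    have : 2 * K ≤ c₀ * (1 + r^2) ^ (-κ) := by
      rw [hc₀]
      nlinarith [Real.rpow_nonneg (le_of_lt two_pos) κ]
    have hle : c₀ * (1 + r^2) ^ (-κ) ≤ (c₀ + c₁ + c₂ + c₃ + 1) * (1 + r^2) ^ (-κ) := by
      apply mul_le_mul_of_nonneg_right _ hmκ
      linarith
    linarith
  · -- large r
    push_neg at hr
    have hrne : r ≠ 0 := by intro h; rw [h] at hr; norm_num at hr
    set R := |r|/2 with hRdef
    have hR : 0 < R := by have := abs_pos.mpr hrne; simp only [hRdef]; linarith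
    set f : ℝ → ℝ := fun y => (1 + y^2) ^ (-b₁) * (1 + (y-r)^2) ^ (-b₂) with hfdef
    set A : Set ℝ := Icc (-R) R with hA
    set B : Set ℝ := Icc (r - R) (r + R) with hB
    set C₁ : Set ℝ := {y : ℝ | R ≤ |y|} ∩ {y : ℝ | |y| ≤ |y - r|} with hC₁
    set C₂ : Set ℝ := {y : ℝ | R ≤ |y - r|} ∩ {y : ℝ | |y - r| ≤ |y|} with hC₂
    have hmA : MeasurableSet A := measurableSet_Icc
    have hmB : MeasurableSet B := measurableSet_Icc
    have hmC₁ : MeasurableSet C₁ := gtv_measC1 R r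
    have hmC₂ : MeasurableSet C₂ := gtv_measC2 R r
    have hfnn : ∀ y, 0 ≤ f y := fun y => by simp only [hfdef]; positivity
    have hnn : ∀ (s : Set ℝ) (y : ℝ), 0 ≤ s.indicator f y :=
      fun s y => indicator_nonneg (fun t _ => hfnn t) y
    have hcover : ∀ y, f y ≤ A.indicator f y + B.indicator f y
        + C₁.indicator f y + C₂.indicator f y := by
      intro y
      by_cases hyA : y ∈ A
      · rw [indicator_of_mem hyA]
        linarith [hnn B y, hnn C₁ y, hnn C₂ y]
      by_cases hyB : y ∈ B
      · rw [indicator_of_mem hyB]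
        linarith [hnn A y, hnn C₁ y, hnn C₂ y]
      have hy1 : R ≤ |y| := by
        by_contra h
        exact hyA (by rw [hA, mem_Icc]; constructor <;> [linarith [neg_abs_le y]; linarith [le_abs_self y]])
      have hy2 : R ≤ |y - r| := by
        by_contra h
        push_neg at h
        have := abs_le.mp h.le
        exact hyB (by rw [hB, mem_Icc]; constructor <;> linarith [this.1, this.2]
          )
      rcases le_total (|y|) (|y - r|) with h | h
      · have : y ∈ C₁ := ⟨hy1, h⟩
        rw [indicator_of_mem this]
        linarith [hnn A y, hnn B y, hnn C₂ y]
      · have : y ∈ C₂ := ⟨hy2, h⟩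
        rw [indicator_of_mem this]
        linarith [hnn A y, hnn B y, hnn C₁ y]
    have hiA : Integrable (A.indicator f) := hf.indicator hmA
    have hiB : Integrable (B.indicator f) := hf.indicator hmB
    have hiC₁ : Integrable (C₁.indicator f) := hf.indicator hmC₁
    have hiC₂ : Integrable (C₂.indicator f) := hf.indicator hmC₂
    have hiAB : Integrable (fun y => A.indicator f y + B.indicator f y) := hiA.add hiB
    have hiABC : Integrable
        (fun y => A.indicator f y + B.indicator f y + C₁.indicator f y) := hiAB.add hiC₁
    have hsplit : ∫ y : ℝ, f y ≤ (∫ y in A, f y) + (∫ y in B, f y)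
        + (∫ y in C₁, f y) + (∫ y in C₂, f y) := by
      calc ∫ y : ℝ, f y
          ≤ ∫ y : ℝ, (A.indicator f y + B.indicator f y
              + C₁.indicator f y + C₂.indicator f y) :=
            integral_mono hf (hiABC.add hiC₂) hcover
        _ = (∫ y : ℝ, A.indicator f y) + (∫ y : ℝ, B.indicator f y)
            + (∫ y : ℝ, C₁.indicator f y) + (∫ y : ℝ, C₂.indicator f y) := by
            rw [integral_add hiABC hiC₂, integral_add hiAB hiC₁, integral_add hiA hiB]
        _ = _ := by
            rw [integral_indicator hmA, integral_indicator hmB,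
              integral_indicator hmC₁, integral_indicator hmC₂]
    -- conversion facts
    have hsqrt : |r| ≤ (1 + r^2) ^ ((1:ℝ)/2) := by
      rw [← Real.sqrt_eq_rpow, show |r| = Real.sqrt (r^2) by rw [Real.sqrt_sq_eq_abs]]
      exact Real.sqrt_le_sqrt (by linarith)
    have hRm : ∀ b : ℝ, 0 < b → b < 1/2 →
        R ^ (1 - 2*b) ≤ (1 + r^2) ^ ((1/2) * (1 - 2*b)) := by
      intro b hb hb'
      have h0 : R ≤ (1 + r^2) ^ ((1:ℝ)/2) := by
        simp only [hRdef]; linarith [abs_nonneg r]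
      calc R ^ (1 - 2*b) ≤ ((1 + r^2) ^ ((1:ℝ)/2)) ^ (1 - 2*b) :=
            Real.rpow_le_rpow hR.le h0 (by linarith)
        _ = (1 + r^2) ^ ((1/2) * (1 - 2*b)) := by
            rw [← Real.rpow_mul hm.le]
    have hconv : ∀ b b' : ℝ, 0 < b → b < 1/2 → 0 < b' → b + b' = b₁ + b₂ →
        (4 ^ b' * (1 + r^2) ^ (-b')) * (2 * (R ^ (1 - 2*b) / (1 - 2*b)))
          ≤ (2 * 4 ^ b' / (1 - 2*b)) * (1 + r^2) ^ (-κ) := by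
      intro b b' hb hb' hb'0 hsum'
      have h12b : (0:ℝ) < 1 - 2*b := by linarith
      calc (4 ^ b' * (1 + r^2) ^ (-b')) * (2 * (R ^ (1 - 2*b) / (1 - 2*b)))
          ≤ (4 ^ b' * (1 + r^2) ^ (-b'))
              * (2 * ((1 + r^2) ^ ((1/2) * (1 - 2*b)) / (1 - 2*b))) := by
            have := hRm b hb hb'
            gcongr
        _ = (2 * 4 ^ b' / (1 - 2*b)) * ((1 + r^2) ^ (-b') * (1 + r^2) ^ ((1/2) * (1 - 2*b))) := by
            field_simp
        _ = (2 * 4 ^ b' / (1 - 2*b)) * (1 + r^2) ^ (-κ) := by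
            rw [← Real.rpow_add hm]
            congr 1
            simp only [hκdef]
            rw [← hsum']
            ring
    have hCconv : R ^ (1 - 2*(b₁+b₂)) ≤ 8 ^ κ * (1 + r^2) ^ (-κ) := by
      have e2 : (1 + r^2)/8 ≤ R^2 := by
        have hR2 : R^2 = r^2/4 := by rw [hRdef, div_pow, sq_abs]; norm_num
        rw [hR2]; linarith
      have e3 : R ^ (1 - 2*(b₁+b₂)) = (R^2 : ℝ) ^ (-κ) := by
        rw [gtv_rpow_eq hR]; congr 1; simp only [hκdef]; ring
      have h5 := rinv_le (by positivity : (0:ℝ) < (1 + r^2)/8) e2 hκ.le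
      rw [Real.div_rpow hm.le (by norm_num : (0:ℝ) ≤ 8),
        Real.rpow_neg (by norm_num : (0:ℝ) ≤ 8), div_eq_mul_inv, inv_inv, mul_comm] at h5
      rw [e3]; exact h5
    have estA := gtv_estA h0₁ h₁ h0₂ hsum hrne
    have estB := gtv_estB h0₁ h0₂ h₂ hsum hrne
    have estC1 := gtv_estC1 h0₁ h0₂ hsum hrne
    have estC2 := gtv_estC2 h0₁ h0₂ hsum hrne
    have hTA : ∫ y in A, f y ≤ c₁ * (1 + r^2) ^ (-κ) := by
      refine le_trans estA ?_
      rw [hc₁]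
      exact hconv b₁ b₂ h0₁ h₁ h0₂ rfl
    have hTB : ∫ y in B, f y ≤ c₂ * (1 + r^2) ^ (-κ) := by
      refine le_trans estB ?_
      rw [hc₂]
      exact hconv b₂ b₁ h0₂ h₂ h0₁ (by ring)
    have hq1 : (0:ℝ) < 2*(b₁+b₂) - 1 := by linarith
    have hTC : (∫ y in C₁, f y) + (∫ y in C₂, f y) ≤ c₃ * (1 + r^2) ^ (-κ) := by
      have : 2 * (R ^ (1 - 2*(b₁+b₂)) / (2*(b₁+b₂) - 1))
          + 2 * (R ^ (1 - 2*(b₁+b₂)) / (2*(b₁+b₂) - 1)) ≤ c₃ * (1 + r^2) ^ (-κ) := by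
        rw [hc₃]
        have h8 : (0:ℝ) ≤ 8 ^ κ := by positivity
        calc 2 * (R ^ (1 - 2*(b₁+b₂)) / (2*(b₁+b₂) - 1))
            + 2 * (R ^ (1 - 2*(b₁+b₂)) / (2*(b₁+b₂) - 1))
            = 4 * R ^ (1 - 2*(b₁+b₂)) / (2*(b₁+b₂) - 1) := by ring
          _ ≤ 4 * (8 ^ κ * (1 + r^2) ^ (-κ)) / (2*(b₁+b₂) - 1) := by gcongr
          _ = 4 * 8 ^ κ / (2*(b₁+b₂) - 1) * (1 + r^2) ^ (-κ) := by ring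
      linarith [estC1, estC2]
    have hfinal : ∫ y : ℝ, f y ≤ (c₁ + c₂ + c₃) * (1 + r^2) ^ (-κ) := by
      have := add_le_add (add_le_add (add_le_add hTA hTB) (le_refl (0:ℝ))) (le_refl (0:ℝ))
      calc ∫ y : ℝ, f y ≤ (∫ y in A, f y) + (∫ y in B, f y)
          + (∫ y in C₁, f y) + (∫ y in C₂, f y) := hsplit
        _ ≤ c₁ * (1 + r^2) ^ (-κ) + c₂ * (1 + r^2) ^ (-κ) + c₃ * (1 + r^2) ^ (-κ) := by
            linarith [hTA, hTB, hTC]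
        _ = (c₁ + c₂ + c₃) * (1 + r^2) ^ (-κ) := by ring
    have : (c₁ + c₂ + c₃) * (1 + r^2) ^ (-κ)
        ≤ (c₀ + c₁ + c₂ + c₃ + 1) * (1 + r^2) ^ (-κ) := by
      apply mul_le_mul_of_nonneg_right _ hmκ
      linarith
    exact le_trans hfinal this

theorem stmt_4 (b₁ b₂ : ℝ) (h0₁ : 0 < b₁) (h0₂ : 0 < b₂)
    (h₁ : b₁ < 1/2) (h₂ : b₂ < 1/2) (hsum : 1/2 < b₁ + b₂) :
    ∃ c : ℝ, 0 < c ∧ ∀ α β : ℝ,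
      ∫ y : ℝ, 1 / (Real.sqrt (1 + (y - α)^2) ^ (2*b₁) * Real.sqrt (1 + (y - β)^2) ^ (2*b₂))
        ≤ c / Real.sqrt (1 + (α - β)^2) ^ (2*b₁ + 2*b₂ - 1) := by
  obtain ⟨c, hc, hmain⟩ := gtv_main h0₁ h0₂ h₁ h₂ hsum
  refine ⟨c, hc, fun α β => ?_⟩
  have hsq : ∀ (t b : ℝ), Real.sqrt (1 + t^2) ^ (2*b) = (1 + t^2) ^ b := by
    intro t b
    rw [Real.sqrt_eq_rpow, ← Real.rpow_mul (by positivity : (0:ℝ) ≤ 1 + t^2)]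
    congr 1
    ring
  set r := β - α with hrdef
  have hpt : ∀ y : ℝ,
      1 / (Real.sqrt (1 + (y - α)^2) ^ (2*b₁) * Real.sqrt (1 + (y - β)^2) ^ (2*b₂))
        = (1 + (y - α)^2) ^ (-b₁) * (1 + ((y - α) - r)^2) ^ (-b₂) := by
    intro y
    rw [hsq, hsq, show (y - α) - r = y - β by rw [hrdef]; ring,
      Real.rpow_neg (by positivity), Real.rpow_neg (by positivity), one_div, mul_inv]
  have hLHS : ∫ y : ℝ,
      1 / (Real.sqrt (1 + (y - α)^2) ^ (2*b₁) * Real.sqrt (1 + (y - β)^2) ^ (2*b₂))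
        = ∫ y : ℝ, (1 + y^2) ^ (-b₁) * (1 + (y - r)^2) ^ (-b₂) := by
    rw [show (fun y : ℝ => 1 / (Real.sqrt (1 + (y - α)^2) ^ (2*b₁)
        * Real.sqrt (1 + (y - β)^2) ^ (2*b₂)))
      = fun y : ℝ => (fun t : ℝ => (1 + t^2) ^ (-b₁) * (1 + (t - r)^2) ^ (-b₂)) (y - α)
      from funext fun y => hpt y]
    exact integral_sub_right_eq_self (fun t : ℝ => (1 + t^2) ^ (-b₁) * (1 + (t - r)^2) ^ (-b₂)) α
  have hRHS : c / Real.sqrt (1 + (α - β)^2) ^ (2*b₁ + 2*b₂ - 1)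
      = c * (1 + r^2) ^ (-(b₁ + b₂ - 1/2)) := by
    rw [show (α - β)^2 = r^2 by rw [hrdef]; ring]
    have h2 : Real.sqrt (1 + r^2) ^ (2*b₁ + 2*b₂ - 1) = (1 + r^2) ^ (b₁ + b₂ - 1/2) := by
      rw [Real.sqrt_eq_rpow, ← Real.rpow_mul (by positivity : (0:ℝ) ≤ 1 + r^2)]
      congr 1
      ring
    rw [h2, div_eq_mul_inv, ← Real.rpow_neg (by positivity : (0:ℝ) ≤ 1 + r^2)]
  rw [hLHS, hRHS]
  exact hmain r
end

section
/- If b > 1/2, then there is a constant c (depending only on b) such that for all real α₀, α₁: ∫_ℝ dx / ⟨α₀ + α₁·x + x²⟩^b ≤ c, where ⟨x⟩ = (1+x²)^{1/2}. -/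
open MeasureTheory

lemma aux_integrable (b : ℝ) (hb : 1/2 < b) :
    Integrable (fun x : ℝ => (1 + x ^ 2) ^ (-b)) := by
  have h := integrable_rpow_neg_one_add_norm_sq (E := ℝ) (μ := volume)
    (r := 2 * b) (by rw [Module.finrank_self]; push_cast; linarith)
  convert h using 2 with x
  rw [Real.norm_eq_abs, sq_abs]
  ring_nf

lemma aux_key (b : ℝ) (hb : 1/2 < b) (P y : ℝ) (hy : y ^ 2 ≤ |P|) :
    1 / Real.sqrt (1 + P ^ 2) ^ b ≤ (2 : ℝ) ^ (b / 2) * (1 + y ^ 2) ^ (-b) := by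
  have hb0 : (0 : ℝ) < b := by linarith
  have h1 : 1 + y ^ 2 ≤ Real.sqrt 2 * Real.sqrt (1 + P ^ 2) := by
    rw [← Real.sqrt_mul (by norm_num) _]
    have hle : (1 + y ^ 2) ^ 2 ≤ 2 * (1 + P ^ 2) := by
      nlinarith [abs_nonneg P, sq_abs P, sq_nonneg (1 - |P|), sq_nonneg (y ^ 2 - |P|)]
    calc 1 + y ^ 2 = Real.sqrt ((1 + y ^ 2) ^ 2) := by
          rw [Real.sqrt_sq (by positivity)]
      _ ≤ Real.sqrt (2 * (1 + P ^ 2)) := Real.sqrt_le_sqrt hle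
  have hpos : (0 : ℝ) < 1 + y ^ 2 := by positivity
  have h2 : (1 + y ^ 2) ^ b ≤ (Real.sqrt 2 * Real.sqrt (1 + P ^ 2)) ^ b :=
    Real.rpow_le_rpow (by positivity) h1 hb0.le
  rw [Real.mul_rpow (Real.sqrt_nonneg _) (Real.sqrt_nonneg _)] at h2
  have hsq2 : Real.sqrt 2 ^ b = (2 : ℝ) ^ (b / 2) := by
    rw [Real.sqrt_eq_rpow, ← Real.rpow_mul (by norm_num : (0:ℝ) ≤ 2)]
    congr 1; ring
  rw [hsq2] at h2
  have hSpos : (0 : ℝ) < Real.sqrt (1 + P ^ 2) ^ b :=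
    Real.rpow_pos_of_pos (Real.sqrt_pos.2 (by positivity)) b
  have hypos : (0 : ℝ) < (1 + y ^ 2) ^ b := Real.rpow_pos_of_pos hpos b
  rw [div_le_iff₀ hSpos, Real.rpow_neg hpos.le, ← div_eq_mul_inv,
    div_mul_eq_mul_div, le_div_iff₀ hypos, one_mul]
  exact h2

theorem stmt_5 (b : ℝ) (hb : 1/2 < b) :
    ∃ c : ℝ, 0 < c ∧ ∀ α₀ α₁ : ℝ,
      ∫ x : ℝ, 1 / Real.sqrt (1 + (α₀ + α₁ * x + x^2)^2) ^ b ≤ c := by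
  set I : ℝ := ∫ x : ℝ, (1 + x ^ 2) ^ (-b) with hI
  have hInt := aux_integrable b hb
  have hInonneg : 0 ≤ I := integral_nonneg fun x => Real.rpow_nonneg (by positivity) _
  refine ⟨(2:ℝ) ^ (b/2) * (2 * I) + 1, by positivity, fun α₀ α₁ => ?_⟩
  -- choose the two (near-)roots
  obtain ⟨r₁, r₂, hroots⟩ : ∃ r₁ r₂ : ℝ, ∀ x : ℝ,
      (x - r₁) ^ 2 ≤ |α₀ + α₁ * x + x ^ 2| ∨ (x - r₂) ^ 2 ≤ |α₀ + α₁ * x + x ^ 2| := by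
    rcases le_or_gt (α₁ ^ 2 - 4 * α₀) 0 with hD | hD
    · refine ⟨-α₁ / 2, -α₁ / 2, fun x => Or.inl ?_⟩
      have : (x - (-α₁ / 2)) ^ 2 ≤ α₀ + α₁ * x + x ^ 2 := by nlinarith
      exact this.trans (le_abs_self _)
    · set s := Real.sqrt (α₁ ^ 2 - 4 * α₀) with hs
      have hs2 : s ^ 2 = α₁ ^ 2 - 4 * α₀ := Real.sq_sqrt (by linarith)
      refine ⟨(-α₁ - s) / 2, (-α₁ + s) / 2, fun x => ?_⟩
      have hprod : α₀ + α₁ * x + x ^ 2 = (x - (-α₁ - s) / 2) * (x - (-α₁ + s) / 2) := by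
        nlinarith [hs2]
      rcases le_total |x - (-α₁ - s) / 2| |x - (-α₁ + s) / 2| with h | h
      · left
        calc (x - (-α₁ - s) / 2) ^ 2 = |x - (-α₁ - s) / 2| * |x - (-α₁ - s) / 2| := by
              rw [abs_mul_abs_self]; ring
          _ ≤ |x - (-α₁ - s) / 2| * |x - (-α₁ + s) / 2| :=
              mul_le_mul_of_nonneg_left h (abs_nonneg _)
          _ = |α₀ + α₁ * x + x ^ 2| := by rw [hprod, abs_mul]
      · right
        calc (x - (-α₁ + s) / 2) ^ 2 = |x - (-α₁ + s) / 2| * |x - (-α₁ + s) / 2| := by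
              rw [abs_mul_abs_self]; ring
          _ ≤ |x - (-α₁ - s) / 2| * |x - (-α₁ + s) / 2| :=
              mul_le_mul_of_nonneg_right h (abs_nonneg _)
          _ = |α₀ + α₁ * x + x ^ 2| := by rw [hprod, abs_mul]
  -- majorant
  set G : ℝ → ℝ := fun x =>
    (2:ℝ) ^ (b/2) * ((1 + (x - r₁) ^ 2) ^ (-b) + (1 + (x - r₂) ^ 2) ^ (-b)) with hG
  have hGint : Integrable G := by
    apply Integrable.const_mul
    exact (hInt.comp_sub_right r₁).add (hInt.comp_sub_right r₂)
  have hle : ∀ x : ℝ, 1 / Real.sqrt (1 + (α₀ + α₁ * x + x^2)^2) ^ b ≤ G x := by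
    intro x
    have h1 : (0:ℝ) ≤ (2:ℝ) ^ (b/2) * (1 + (x - r₁) ^ 2) ^ (-b) := by positivity
    have h2 : (0:ℝ) ≤ (2:ℝ) ^ (b/2) * (1 + (x - r₂) ^ 2) ^ (-b) := by positivity
    have hGx : G x = (2:ℝ) ^ (b/2) * (1 + (x - r₁) ^ 2) ^ (-b)
        + (2:ℝ) ^ (b/2) * (1 + (x - r₂) ^ 2) ^ (-b) := by rw [hG]; ring
    rcases hroots x with h | h
    · calc 1 / Real.sqrt (1 + (α₀ + α₁ * x + x^2)^2) ^ b
          ≤ (2:ℝ) ^ (b/2) * (1 + (x - r₁) ^ 2) ^ (-b) := aux_key b hb _ _ h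
        _ ≤ G x := by rw [hGx]; linarith
    · calc 1 / Real.sqrt (1 + (α₀ + α₁ * x + x^2)^2) ^ b
          ≤ (2:ℝ) ^ (b/2) * (1 + (x - r₂) ^ 2) ^ (-b) := aux_key b hb _ _ h
        _ ≤ G x := by rw [hGx]; linarith
  have hmono : ∫ x : ℝ, 1 / Real.sqrt (1 + (α₀ + α₁ * x + x^2)^2) ^ b ≤ ∫ x, G x := by
    apply integral_mono_of_nonneg
    · exact Filter.Eventually.of_forall fun x => by positivity
    · exact hGint
    · exact Filter.Eventually.of_forall hle
  have hGval : ∫ x, G x = (2:ℝ) ^ (b/2) * (2 * I) := by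
    rw [hG]
    rw [integral_const_mul]
    rw [integral_add (hInt.comp_sub_right r₁) (hInt.comp_sub_right r₂)]
    have e1 : ∫ x : ℝ, (1 + (x - r₁) ^ 2) ^ (-b) = I :=
      integral_sub_right_eq_self (fun x : ℝ => (1 + x ^ 2) ^ (-b)) r₁
    have e2 : ∫ x : ℝ, (1 + (x - r₂) ^ 2) ^ (-b) = I :=
      integral_sub_right_eq_self (fun x : ℝ => (1 + x ^ 2) ^ (-b)) r₂
    rw [e1, e2]; ring
  rw [hGval] at hmono
  linarith
end

section
/- If 0 < b < 1/2, then there is a constant c (depending only on b) such that for all β > 0 and all real α: ∫_{|x|<β} dx / (⟨x⟩^{4b-1}·|α-x|^{1/2}) ≤ c·(1+β)^{2-4b} / ⟨α⟩^{1/2}, where ⟨x⟩ = (1+x²)^{1/2}. -/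
/-!
Write `⟨x⟩ = √(1 + x²)`, `A = ⟨α⟩` and `p = 1 - 4b > -1`, and split the integral according to
whether `|α - x| < A / 4`. Away from `α` the singular factor is at most `2 / √A` and
`⟨x⟩ ^ p ≤ 2 (1 + |x|) ^ p`, whose integral over `(-β, β)` is `O((1 + β) ^ (p + 1))`.
Near `α` the bracket is 1-Lipschitz, so `⟨x⟩ ≥ A / 2`, while `⟨x⟩ ≤ 1 + β`; hence
`⟨x⟩ ^ p = ⟨x⟩ ^ (p + 1) / ⟨x⟩ ≤ 2 (1 + β) ^ (p + 1) / A`, and the singular factor integrates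
to `2 √A` over the window `|α - x| < A / 4`.
-/

open MeasureTheory Set

theorem setIntegral_Ioo_neg_comp_abs (φ : ℝ → ℝ) (a : ℝ) :
    ∫ x in Ioo (-a) a, φ |x| = 2 * ∫ x in Ioo 0 a, φ x := by
  have h : (Ioo (-a) a).indicator (fun x => φ |x|) = fun x => (Iio a).indicator φ |x| := by
    ext x
    simp only [indicator, mem_Ioo, mem_Iio, ← abs_lt]
  rw [← integral_indicator measurableSet_Ioo, h, integral_comp_abs,
    setIntegral_indicator measurableSet_Iio, Ioi_inter_Iio]

theorem setIntegral_Ioo_abs_rpow {q a : ℝ} (hq : -1 < q) (ha : 0 ≤ a) :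
    ∫ x in Ioo (-a) a, |x| ^ q = 2 * a ^ (q + 1) / (q + 1) := by
  rw [setIntegral_Ioo_neg_comp_abs (· ^ q), ← integral_Ioc_eq_integral_Ioo,
    ← intervalIntegral.integral_of_le ha, integral_rpow (Or.inl hq),
    Real.zero_rpow (by linarith)]
  ring

theorem setIntegral_Ioo_abs_sub_rpow {q a : ℝ} (hq : -1 < q) (ha : 0 ≤ a) (c : ℝ) :
    ∫ x in Ioo (c - a) (c + a), |c - x| ^ q = 2 * a ^ (q + 1) / (q + 1) := by
  rw [← integral_Ioc_eq_integral_Ioo, ← intervalIntegral.integral_of_le (by linarith),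
    intervalIntegral.integral_comp_sub_left (|·| ^ q), sub_add_cancel_left, sub_sub_cancel,
    intervalIntegral.integral_of_le (by linarith), integral_Ioc_eq_integral_Ioo,
    setIntegral_Ioo_abs_rpow hq ha]

theorem setIntegral_Ioo_one_add_abs_rpow_le {p a : ℝ} (hp : -1 < p) (ha : 0 ≤ a) :
    ∫ x in Ioo (-a) a, (1 + |x|) ^ p ≤ 2 * (1 + a) ^ (p + 1) / (p + 1) := by
  have hp1 : 0 < p + 1 := by linarith
  have h : ∫ x in Ioo 0 a, (1 + x) ^ p = ((1 + a) ^ (p + 1) - 1) / (p + 1) := by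
    rw [← integral_Ioc_eq_integral_Ioo, ← intervalIntegral.integral_of_le ha,
      intervalIntegral.integral_comp_add_left (· ^ p), integral_rpow (Or.inl hp), add_zero,
      Real.one_rpow]
  rw [setIntegral_Ioo_neg_comp_abs (fun t => (1 + t) ^ p), h, mul_div_assoc]
  gcongr
  linarith

theorem abs_le_sqrt_one_add_sq (x : ℝ) : |x| ≤ √(1 + x ^ 2) :=
  Real.abs_le_sqrt (by linarith)

theorem sqrt_one_add_sq_le_add_abs_sub (x y : ℝ) :
    √(1 + y ^ 2) ≤ √(1 + x ^ 2) + |y - x| := by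
  have hx : x * (y - x) ≤ √(1 + x ^ 2) * |y - x| := by
    calc x * (y - x) ≤ |x| * |y - x| := by rw [← abs_mul]; exact le_abs_self _
      _ ≤ √(1 + x ^ 2) * |y - x| := by gcongr; exact abs_le_sqrt_one_add_sq x
  rw [Real.sqrt_le_left (by positivity)]
  nlinarith [Real.sq_sqrt (by positivity : (0 : ℝ) ≤ 1 + x ^ 2), sq_abs (y - x)]

theorem sqrt_one_add_sq_rpow_le_two_mul {p : ℝ} (hp : -2 ≤ p) (x : ℝ) :
    √(1 + x ^ 2) ^ p ≤ 2 * (1 + |x|) ^ p := by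
  have hx : 0 < √(1 + x ^ 2) := by positivity
  rcases le_total 0 p with hp0 | hp0
  · calc √(1 + x ^ 2) ^ p ≤ (1 + |x|) ^ p := by
          gcongr; simpa using sqrt_one_add_norm_sq_le x
      _ ≤ 2 * (1 + |x|) ^ p := le_mul_of_one_le_left (by positivity) one_le_two
  · have hle : (1 + |x|) / √2 ≤ √(1 + x ^ 2) := by
      rw [div_le_iff₀ (by positivity), mul_comm]
      simpa using one_add_norm_le_sqrt_two_mul_sqrt x
    calc √(1 + x ^ 2) ^ p ≤ ((1 + |x|) / √2) ^ p :=
          Real.rpow_le_rpow_of_nonpos (by positivity) hle hp0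
      _ = √2 ^ (-p) * (1 + |x|) ^ p := by
          rw [Real.div_rpow (by positivity) (by positivity), Real.rpow_neg (by positivity)]; ring
      _ ≤ 2 * (1 + |x|) ^ p := by
          gcongr
          calc √2 ^ (-p) ≤ √2 ^ (2 : ℝ) :=
                Real.rpow_le_rpow_of_exponent_le (Real.one_le_sqrt.mpr one_le_two) (by linarith)
            _ = 2 := by rw [Real.rpow_two, Real.sq_sqrt zero_le_two]

theorem sqrt_one_add_sq_rpow_le_of_abs_sub_lt {p β x α : ℝ} (hp : -1 ≤ p) (hx : |x| ≤ β)
    (hxα : |α - x| < √(1 + α ^ 2) / 4) :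
    √(1 + x ^ 2) ^ p ≤ 2 * (1 + β) ^ (p + 1) / √(1 + α ^ 2) := by
  have hx0 : 0 < √(1 + x ^ 2) := by positivity
  have hlower : √(1 + α ^ 2) ≤ 2 * √(1 + x ^ 2) := by
    linarith [sqrt_one_add_sq_le_add_abs_sub x α, abs_sub_comm α x]
  have hupper : √(1 + x ^ 2) ≤ 1 + β := by
    linarith [show √(1 + x ^ 2) ≤ 1 + |x| by simpa using sqrt_one_add_norm_sq_le x]
  rw [le_div_iff₀ (by positivity)]
  calc √(1 + x ^ 2) ^ p * √(1 + α ^ 2)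
        ≤ √(1 + x ^ 2) ^ p * (2 * √(1 + x ^ 2)) := by gcongr
    _ = 2 * √(1 + x ^ 2) ^ (p + 1) := by rw [Real.rpow_add_one hx0.ne']; ring
    _ ≤ 2 * (1 + β) ^ (p + 1) := by gcongr; linarith

theorem rpow_neg_half_le_of_div_four_le {a t : ℝ} (ha : 0 < a) (hat : a / 4 ≤ t) :
    t ^ (-(1 / 2 : ℝ)) ≤ 2 / √a := by
  calc t ^ (-(1 / 2 : ℝ)) ≤ (a / 4) ^ (-(1 / 2 : ℝ)) :=
        Real.rpow_le_rpow_of_nonpos (by positivity) hat (by norm_num)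
    _ = 2 / √a := by
        rw [Real.rpow_neg (by positivity), ← Real.sqrt_eq_rpow, Real.sqrt_div' _ (by norm_num),
          show (4 : ℝ) = 2 ^ 2 by norm_num, Real.sqrt_sq zero_le_two, inv_div]

theorem sqrt_one_add_sq_rpow_mul_abs_sub_rpow_le {p β x α : ℝ} (hp : -1 ≤ p) (hx : |x| ≤ β) :
    √(1 + x ^ 2) ^ p * |α - x| ^ (-(1 / 2 : ℝ)) ≤
      4 / √√(1 + α ^ 2) * (1 + |x|) ^ p + 2 * (1 + β) ^ (p + 1) / √(1 + α ^ 2) *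
        (Ioo (α - √(1 + α ^ 2) / 4) (α + √(1 + α ^ 2) / 4)).indicator
          (fun y => |α - y| ^ (-(1 / 2 : ℝ))) x := by
  set A := √(1 + α ^ 2)
  have hA : 0 < A := by positivity
  by_cases hnear : |α - x| < A / 4
  · have hxT : x ∈ Ioo (α - A / 4) (α + A / 4) := by
      constructor <;> linarith [abs_lt.mp hnear]
    rw [indicator_of_mem hxT]
    refine le_add_of_nonneg_of_le (by positivity) ?_
    gcongr
    exact sqrt_one_add_sq_rpow_le_of_abs_sub_lt hp hx hnear
  · have hxT : x ∉ Ioo (α - A / 4) (α + A / 4) := fun h =>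
      hnear (abs_lt.mpr ⟨by linarith [h.2], by linarith [h.1]⟩)
    rw [indicator_of_notMem hxT, mul_zero, add_zero]
    calc √(1 + x ^ 2) ^ p * |α - x| ^ (-(1 / 2 : ℝ))
          ≤ 2 * (1 + |x|) ^ p * (2 / √A) :=
          mul_le_mul (sqrt_one_add_sq_rpow_le_two_mul (by linarith) x)
            (rpow_neg_half_le_of_div_four_le hA (not_lt.mp hnear)) (by positivity) (by positivity)
      _ = 4 / √A * (1 + |x|) ^ p := by ring

theorem setIntegral_Ioo_sqrt_one_add_sq_rpow_mul_abs_sub_rpow_le {p β : ℝ} (hp : -1 < p)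
    (hβ : 0 ≤ β) (α : ℝ) :
    ∫ x in Ioo (-β) β, √(1 + x ^ 2) ^ p * |α - x| ^ (-(1 / 2 : ℝ))
      ≤ (8 / (p + 1) + 4) * (1 + β) ^ (p + 1) / √√(1 + α ^ 2) := by
  set A := √(1 + α ^ 2)
  have hA : 0 < A := by positivity
  set near := (Ioo (α - A / 4) (α + A / 4)).indicator (fun y => |α - y| ^ (-(1 / 2 : ℝ)))
  have hnear_nonneg : ∀ x, 0 ≤ near x := fun x => indicator_nonneg (fun y _ => by positivity) x
  have hnear : ∫ x, near x = 2 * √A := by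
    rw [integral_indicator measurableSet_Ioo,
      setIntegral_Ioo_abs_sub_rpow (by norm_num) (by positivity),
      show -(1 / 2 : ℝ) + 1 = 1 / 2 by norm_num, ← Real.sqrt_eq_rpow,
      Real.sqrt_div' _ (by norm_num), show (4 : ℝ) = 2 ^ 2 by norm_num, Real.sqrt_sq zero_le_two]
    ring
  -- The value above was computed without integrability assumptions and is nonzero.
  have hnear_int : Integrable near := .of_integral_ne_zero (by rw [hnear]; positivity)
  have hfar_int : IntegrableOn (fun x => (1 + |x|) ^ p) (Ioo (-β) β) :=
    (Continuous.integrableOn_Icc ((continuous_const.add continuous_abs).rpow_const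
      fun x => Or.inl (by positivity : (0 : ℝ) < 1 + |x|).ne')).mono_set Ioo_subset_Icc_self
  calc _ ≤ ∫ x in Ioo (-β) β,
          (4 / √A * (1 + |x|) ^ p + 2 * (1 + β) ^ (p + 1) / A * near x) :=
        integral_mono_of_nonneg (ae_of_all _ fun x => by positivity)
          ((hfar_int.const_mul _).add (hnear_int.integrableOn.const_mul _))
          (ae_restrict_of_forall_mem measurableSet_Ioo fun x hx =>
            sqrt_one_add_sq_rpow_mul_abs_sub_rpow_le hp.le (abs_lt.mpr hx).le)
    _ = 4 / √A * (∫ x in Ioo (-β) β, (1 + |x|) ^ p)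
          + 2 * (1 + β) ^ (p + 1) / A * ∫ x in Ioo (-β) β, near x := by
        rw [integral_add (hfar_int.const_mul _) (hnear_int.integrableOn.const_mul _),
          integral_const_mul, integral_const_mul]
    _ ≤ 4 / √A * (2 * (1 + β) ^ (p + 1) / (p + 1))
          + 2 * (1 + β) ^ (p + 1) / A * (2 * √A) := by
        gcongr
        · exact setIntegral_Ioo_one_add_abs_rpow_le hp hβ
        · rw [← hnear]
          exact setIntegral_le_integral hnear_int (ae_of_all _ hnear_nonneg)
    _ = _ := by
        have hp1 : p + 1 ≠ 0 := by linarith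
        field_simp
        rw [Real.sq_sqrt hA.le]
        ring

theorem stmt_6_general (b : ℝ) (hb : b < 1/2) :
    ∃ c : ℝ, 0 < c ∧ ∀ (β : ℝ), 0 < β → ∀ α : ℝ,
      ∫ x in {x : ℝ | |x| < β},
          1 / (Real.sqrt (1 + x^2) ^ (4*b - 1) * |α - x| ^ ((1:ℝ)/2))
        ≤ c * (1 + β) ^ (2 - 4*b) / Real.sqrt (1 + α^2) ^ ((1:ℝ)/2) := by
  have hp : -1 < 1 - 4 * b := by linarith
  have hc : 0 < 8 / (2 - 4 * b) + 4 := by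
    have : 0 < 2 - 4 * b := by linarith
    positivity
  refine ⟨8 / (2 - 4 * b) + 4, hc, fun β hβ α => ?_⟩
  have hS : {x : ℝ | |x| < β} = Ioo (-β) β := Set.ext fun _ => by simp [abs_lt]
  have hf (x : ℝ) : 1 / (√(1 + x ^ 2) ^ (4 * b - 1) * |α - x| ^ ((1 : ℝ) / 2)) =
      √(1 + x ^ 2) ^ (1 - 4 * b) * |α - x| ^ (-(1 / 2 : ℝ)) := by
    rw [one_div, mul_inv, ← Real.rpow_neg (by positivity), ← Real.rpow_neg (abs_nonneg _),
      neg_sub]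
  simp_rw [hS, hf, ← Real.sqrt_eq_rpow, show 2 - 4 * b = 1 - 4 * b + 1 by ring]
  exact setIntegral_Ioo_sqrt_one_add_sq_rpow_mul_abs_sub_rpow_le hp hβ.le α

theorem stmt_6 (b : ℝ) (hb0 : 0 < b) (hb : b < 1/2) :
    ∃ c : ℝ, 0 < c ∧ ∀ (β : ℝ), 0 < β → ∀ α : ℝ,
      ∫ x in {x : ℝ | |x| < β},
          1 / (Real.sqrt (1 + x^2) ^ (4*b - 1) * |α - x| ^ ((1:ℝ)/2))
        ≤ c * (1 + β) ^ (2 - 4*b) / Real.sqrt (1 + α^2) ^ ((1:ℝ)/2) :=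
  stmt_6_general b hb
end
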